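/- For all real x with 0 < |x| < 1/4: (i) c_0(x) = 0 and c_{−m}(x) = conj(c_m(x)) for every integer m; (ii) for every nonzero even integer m, the Fourier coefficient c_m(x) is purely imaginary (its real part is 0); (iii) for every odd integer m, c_m(x) is real (its imaginary part is 0). -/
import Mathlib


open Complex in
/-- `f(x,t)` from the paper (principal branch of the complex logarithm). -/
noncomputable def fFun (x t : ℝ) : ℂ :=
  Complex.log (1 - (x : ℂ) ^ 2 / 2 - Complex.I * (x : ℂ) +
      ((x : ℂ) ^ 2 / 2) * Complex.exp (Complex.I * (t : ℂ))) +
  Complex.log (1 - (x : ℂ) ^ 2 / 2 + Complex.I * (x : ℂ) +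
      ((x : ℂ) ^ 2 / 2) * Complex.exp (-(Complex.I * (t : ℂ)))) -
  Complex.log (1 - (x : ℂ) ^ 2 / 2 - Complex.I * (x : ℂ) -
      ((x : ℂ) ^ 2 / 2) * Complex.exp (-(Complex.I * (t : ℂ)))) -
  Complex.log (1 - (x : ℂ) ^ 2 / 2 + Complex.I * (x : ℂ) -
      ((x : ℂ) ^ 2 / 2) * Complex.exp (Complex.I * (t : ℂ)))

/-- `g(x,t)` from the paper (principal branch of the complex logarithm). -/
noncomputable def gFun (x t : ℝ) : ℂ :=
  Complex.I * Complex.log (1 - (x : ℂ) ^ 2 / 2 - Complex.I * (x : ℂ) +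
      ((x : ℂ) ^ 2 / 2) * Complex.exp (Complex.I * (t : ℂ))) -
  Complex.I * Complex.log (1 - (x : ℂ) ^ 2 / 2 + Complex.I * (x : ℂ) +
      ((x : ℂ) ^ 2 / 2) * Complex.exp (-(Complex.I * (t : ℂ)))) +
  Complex.I * Complex.log (1 - (x : ℂ) ^ 2 / 2 - Complex.I * (x : ℂ) -
      ((x : ℂ) ^ 2 / 2) * Complex.exp (-(Complex.I * (t : ℂ)))) -
  Complex.I * Complex.log (1 - (x : ℂ) ^ 2 / 2 + Complex.I * (x : ℂ) -
      ((x : ℂ) ^ 2 / 2) * Complex.exp (Complex.I * (t : ℂ)))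

/-- `h(x,t) = f(x,t)/g(x,t)`. -/
noncomputable def hFun (x t : ℝ) : ℂ := fFun x t / gFun x t

/-- The Fourier coefficients `c_m(x) = (1/2π) ∫_{-π}^{π} h(x,t) e^{-imt} dt`. -/
noncomputable def cCoef (m : ℤ) (x : ℝ) : ℂ :=
  (1 / (2 * Real.pi)) •
    ∫ t in (-Real.pi)..Real.pi,
      hFun x t * Complex.exp (-(Complex.I * (m : ℂ) * (t : ℂ)))

section aux

/-- the symmetry `h(x, π - t) = -h(x,t)` -/
lemma aux_key1 (t : ℝ) : Complex.exp (Complex.I * ((Real.pi - t : ℝ) : ℂ)) =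
    -Complex.exp (-(Complex.I * (t : ℂ))) := by
  push_cast
  rw [mul_sub, sub_eq_add_neg, Complex.exp_add,
    show (Complex.I * (Real.pi:ℂ)) = (Real.pi:ℂ) * Complex.I by ring, Complex.exp_pi_mul_I]
  ring

lemma aux_key2 (t : ℝ) : Complex.exp (-(Complex.I * ((Real.pi - t : ℝ) : ℂ))) =
    -Complex.exp (Complex.I * (t : ℂ)) := by
  push_cast
  have e : Complex.exp (-((Real.pi:ℂ) * Complex.I)) = -1 := by
    rw [Complex.exp_neg, Complex.exp_pi_mul_I]; norm_num
  rw [show (-(Complex.I * ((Real.pi:ℂ) - (t:ℂ)))) =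
      Complex.I * (t:ℂ) + -((Real.pi:ℂ) * Complex.I) by ring,
    Complex.exp_add, e]
  ring

lemma hFun_sym (x t : ℝ) : hFun x (Real.pi - t) = -hFun x t := by
  have a1 : (1 - (x : ℂ) ^ 2 / 2 - Complex.I * (x : ℂ) +
      ((x : ℂ) ^ 2 / 2) * Complex.exp (Complex.I * ((Real.pi - t : ℝ) : ℂ))) =
      (1 - (x : ℂ) ^ 2 / 2 - Complex.I * (x : ℂ) -
      ((x : ℂ) ^ 2 / 2) * Complex.exp (-(Complex.I * (t : ℂ)))) := by
    rw [aux_key1]; ring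
  have a2 : (1 - (x : ℂ) ^ 2 / 2 + Complex.I * (x : ℂ) +
      ((x : ℂ) ^ 2 / 2) * Complex.exp (-(Complex.I * ((Real.pi - t : ℝ) : ℂ)))) =
      (1 - (x : ℂ) ^ 2 / 2 + Complex.I * (x : ℂ) -
      ((x : ℂ) ^ 2 / 2) * Complex.exp (Complex.I * (t : ℂ))) := by
    rw [aux_key2]; ring
  have a3 : (1 - (x : ℂ) ^ 2 / 2 - Complex.I * (x : ℂ) -
      ((x : ℂ) ^ 2 / 2) * Complex.exp (-(Complex.I * ((Real.pi - t : ℝ) : ℂ)))) =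
      (1 - (x : ℂ) ^ 2 / 2 - Complex.I * (x : ℂ) +
      ((x : ℂ) ^ 2 / 2) * Complex.exp (Complex.I * (t : ℂ))) := by
    rw [aux_key2]; ring
  have a4 : (1 - (x : ℂ) ^ 2 / 2 + Complex.I * (x : ℂ) -
      ((x : ℂ) ^ 2 / 2) * Complex.exp (Complex.I * ((Real.pi - t : ℝ) : ℂ))) =
      (1 - (x : ℂ) ^ 2 / 2 + Complex.I * (x : ℂ) +
      ((x : ℂ) ^ 2 / 2) * Complex.exp (-(Complex.I * (t : ℂ)))) := by
    rw [aux_key1]; ring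
  have hf : fFun x (Real.pi - t) = -fFun x t := by
    unfold fFun; rw [a1, a2, a3, a4]; ring
  have hg : gFun x (Real.pi - t) = gFun x t := by
    unfold gFun; rw [a1, a2, a3, a4]; ring
  unfold hFun
  rw [hf, hg, neg_div]

/-- real parts of the log arguments are positive when `|x| < 1/4` -/
lemma re_aux (x t : ℝ) (hx : |x| < 1/4) (s₁ s₂ : ℝ) (hs : s₂ = 1 ∨ s₂ = -1) :
    0 < (1 - (x : ℂ) ^ 2 / 2 + s₁ * (Complex.I * (x : ℂ)) +
      s₂ * (((x : ℂ) ^ 2 / 2) * Complex.exp (Complex.I * (t : ℂ)))).re := by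
  have hexp : Complex.exp (Complex.I * (t : ℂ)) = Complex.cos t + Complex.sin t * Complex.I := by
    rw [show Complex.I * (t:ℂ) = (t:ℂ) * Complex.I by ring, Complex.exp_mul_I]
  rw [hexp, show ((x:ℂ)^2) = ((x^2:ℝ):ℂ) by push_cast; ring]
  have hx2 : x^2 < 1/16 := by nlinarith [abs_nonneg x, _root_.sq_abs x]
  simp only [Complex.add_re, Complex.sub_re, Complex.mul_re, Complex.mul_im, Complex.one_re,
    Complex.I_re, Complex.I_im, Complex.ofReal_re, Complex.ofReal_im,
    Complex.cos_ofReal_re, Complex.sin_ofReal_re, Complex.cos_ofReal_im, Complex.sin_ofReal_im,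
    Complex.div_re, Complex.div_im, Complex.normSq, Complex.add_im, Complex.sub_im, Complex.one_im]
  rcases hs with h | h <;> subst h <;> norm_num <;>
    nlinarith [Real.neg_one_le_cos t, Real.cos_le_one t, sq_nonneg x]

lemma conj_log_of_re_pos {z : ℂ} (hz : 0 < z.re) :
    (starRingEnd ℂ) (Complex.log z) = Complex.log ((starRingEnd ℂ) z) := by
  rw [Complex.log_conj]
  intro h
  rw [Complex.arg_eq_pi_iff] at h
  linarith [h.1]

lemma conj_hFun (x t : ℝ) (hx : |x| < 1/4) :
    (starRingEnd ℂ) (hFun x t) = hFun x t := by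
  have hneg : Complex.exp (-(Complex.I * (t:ℂ))) = Complex.exp (Complex.I * ((-t:ℝ):ℂ)) := by
    congr 1; push_cast; ring
  have h1 : 0 < (1 - (x : ℂ) ^ 2 / 2 - Complex.I * (x : ℂ) +
      ((x : ℂ) ^ 2 / 2) * Complex.exp (Complex.I * (t : ℂ))).re := by
    have h := re_aux x t hx (-1) 1 (Or.inl rfl)
    have e : (1 - (x:ℂ)^2/2 + ((-1:ℝ):ℂ)*(Complex.I*(x:ℂ)) +
        ((1:ℝ):ℂ)*(((x:ℂ)^2/2)*Complex.exp (Complex.I*(t:ℂ)))) =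
        (1 - (x : ℂ) ^ 2 / 2 - Complex.I * (x : ℂ) +
        ((x : ℂ) ^ 2 / 2) * Complex.exp (Complex.I * (t : ℂ))) := by push_cast; ring
    rwa [e] at h
  have h2 : 0 < (1 - (x : ℂ) ^ 2 / 2 + Complex.I * (x : ℂ) +
      ((x : ℂ) ^ 2 / 2) * Complex.exp (-(Complex.I * (t : ℂ)))).re := by
    have h := re_aux x (-t) hx 1 1 (Or.inl rfl)
    have e : (1 - (x:ℂ)^2/2 + ((1:ℝ):ℂ)*(Complex.I*(x:ℂ)) +
        ((1:ℝ):ℂ)*(((x:ℂ)^2/2)*Complex.exp (Complex.I*((-t:ℝ):ℂ)))) =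
        (1 - (x : ℂ) ^ 2 / 2 + Complex.I * (x : ℂ) +
        ((x : ℂ) ^ 2 / 2) * Complex.exp (-(Complex.I * (t : ℂ)))) := by
      rw [hneg]; push_cast; ring
    rwa [e] at h
  have h3 : 0 < (1 - (x : ℂ) ^ 2 / 2 - Complex.I * (x : ℂ) -
      ((x : ℂ) ^ 2 / 2) * Complex.exp (-(Complex.I * (t : ℂ)))).re := by
    have h := re_aux x (-t) hx (-1) (-1) (Or.inr rfl)
    have e : (1 - (x:ℂ)^2/2 + ((-1:ℝ):ℂ)*(Complex.I*(x:ℂ)) +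
        ((-1:ℝ):ℂ)*(((x:ℂ)^2/2)*Complex.exp (Complex.I*((-t:ℝ):ℂ)))) =
        (1 - (x : ℂ) ^ 2 / 2 - Complex.I * (x : ℂ) -
        ((x : ℂ) ^ 2 / 2) * Complex.exp (-(Complex.I * (t : ℂ)))) := by
      rw [hneg]; push_cast; ring
    rwa [e] at h
  have h4 : 0 < (1 - (x : ℂ) ^ 2 / 2 + Complex.I * (x : ℂ) -
      ((x : ℂ) ^ 2 / 2) * Complex.exp (Complex.I * (t : ℂ))).re := by
    have h := re_aux x t hx 1 (-1) (Or.inr rfl)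
    have e : (1 - (x:ℂ)^2/2 + ((1:ℝ):ℂ)*(Complex.I*(x:ℂ)) +
        ((-1:ℝ):ℂ)*(((x:ℂ)^2/2)*Complex.exp (Complex.I*(t:ℂ)))) =
        (1 - (x : ℂ) ^ 2 / 2 + Complex.I * (x : ℂ) -
        ((x : ℂ) ^ 2 / 2) * Complex.exp (Complex.I * (t : ℂ))) := by push_cast; ring
    rwa [e] at h
  have hce : (starRingEnd ℂ) (Complex.exp (Complex.I * (t : ℂ))) =
      Complex.exp (-(Complex.I * (t:ℂ))) := by
    rw [← Complex.exp_conj]; congr 1; simp [Complex.conj_I]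
  have hce' : (starRingEnd ℂ) (Complex.exp (-(Complex.I * (t : ℂ)))) =
      Complex.exp (Complex.I * (t:ℂ)) := by
    rw [← Complex.exp_conj]; congr 1; simp [Complex.conj_I]
  have c12 : (starRingEnd ℂ) (1 - (x : ℂ) ^ 2 / 2 - Complex.I * (x : ℂ) +
      ((x : ℂ) ^ 2 / 2) * Complex.exp (Complex.I * (t : ℂ))) =
      (1 - (x : ℂ) ^ 2 / 2 + Complex.I * (x : ℂ) +
      ((x : ℂ) ^ 2 / 2) * Complex.exp (-(Complex.I * (t : ℂ)))) := by
    simp only [map_add, map_sub, map_mul, map_one, map_div₀, map_pow, map_ofNat,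
      Complex.conj_I, Complex.conj_ofReal, hce]
    ring
  have c21 : (starRingEnd ℂ) (1 - (x : ℂ) ^ 2 / 2 + Complex.I * (x : ℂ) +
      ((x : ℂ) ^ 2 / 2) * Complex.exp (-(Complex.I * (t : ℂ)))) =
      (1 - (x : ℂ) ^ 2 / 2 - Complex.I * (x : ℂ) +
      ((x : ℂ) ^ 2 / 2) * Complex.exp (Complex.I * (t : ℂ))) := by
    rw [← c12, Complex.conj_conj]
  have c34 : (starRingEnd ℂ) (1 - (x : ℂ) ^ 2 / 2 - Complex.I * (x : ℂ) -
      ((x : ℂ) ^ 2 / 2) * Complex.exp (-(Complex.I * (t : ℂ)))) =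
      (1 - (x : ℂ) ^ 2 / 2 + Complex.I * (x : ℂ) -
      ((x : ℂ) ^ 2 / 2) * Complex.exp (Complex.I * (t : ℂ))) := by
    simp only [map_add, map_sub, map_mul, map_one, map_div₀, map_pow, map_ofNat,
      Complex.conj_I, Complex.conj_ofReal, hce']
    ring
  have c43 : (starRingEnd ℂ) (1 - (x : ℂ) ^ 2 / 2 + Complex.I * (x : ℂ) -
      ((x : ℂ) ^ 2 / 2) * Complex.exp (Complex.I * (t : ℂ))) =
      (1 - (x : ℂ) ^ 2 / 2 - Complex.I * (x : ℂ) -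
      ((x : ℂ) ^ 2 / 2) * Complex.exp (-(Complex.I * (t : ℂ)))) := by
    rw [← c34, Complex.conj_conj]
  have hf : (starRingEnd ℂ) (fFun x t) = fFun x t := by
    unfold fFun
    rw [map_sub, map_sub, map_add, conj_log_of_re_pos h1, conj_log_of_re_pos h2,
      conj_log_of_re_pos h3, conj_log_of_re_pos h4, c12, c21, c34, c43]
    ring
  have hg : (starRingEnd ℂ) (gFun x t) = gFun x t := by
    unfold gFun
    rw [map_sub, map_add, map_sub, map_mul, map_mul, map_mul, map_mul,
      conj_log_of_re_pos h1, conj_log_of_re_pos h2,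
      conj_log_of_re_pos h3, conj_log_of_re_pos h4, c12, c21, c34, c43, Complex.conj_I]
    ring
  unfold hFun
  rw [map_div₀, hf, hg]

/-- the integrand of the Fourier coefficient -/
noncomputable def Fcc (x : ℝ) (k : ℤ) (t : ℝ) : ℂ :=
  hFun x t * Complex.exp (-(Complex.I * (k : ℂ) * (t : ℂ)))

lemma hFun_periodic (x : ℝ) : Function.Periodic (hFun x) (2 * Real.pi) := by
  intro u
  have e1 : Complex.exp (Complex.I * ((u + 2 * Real.pi : ℝ) : ℂ)) =
      Complex.exp (Complex.I * (u : ℂ)) := by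
    push_cast
    rw [mul_add, Complex.exp_add, show Complex.I * (2 * (Real.pi:ℂ)) =
      2 * (Real.pi:ℂ) * Complex.I by ring, Complex.exp_two_pi_mul_I, mul_one]
  have e2 : Complex.exp (-(Complex.I * ((u + 2 * Real.pi : ℝ) : ℂ))) =
      Complex.exp (-(Complex.I * (u : ℂ))) := by
    push_cast
    have e : Complex.exp (-(2 * (Real.pi:ℂ) * Complex.I)) = 1 := by
      rw [Complex.exp_neg, Complex.exp_two_pi_mul_I, inv_one]
    rw [show -(Complex.I * ((u:ℂ) + 2 * (Real.pi:ℂ))) =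
      -(Complex.I * (u:ℂ)) + -(2 * (Real.pi:ℂ) * Complex.I) by ring, Complex.exp_add,
      e, mul_one]
  unfold hFun fFun gFun
  rw [e1, e2]

lemma Fcc_periodic (x : ℝ) (k : ℤ) : Function.Periodic (Fcc x k) (2 * Real.pi) := by
  intro u
  unfold Fcc
  rw [hFun_periodic x u]
  congr 1
  push_cast
  rw [show -(Complex.I * (k:ℂ) * ((u:ℂ) + 2 * (Real.pi:ℂ))) =
    -(Complex.I * (k:ℂ) * (u:ℂ)) + (-k : ℤ) * (2 * (Real.pi:ℂ) * Complex.I) by push_cast; ring,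
    Complex.exp_add, Complex.exp_int_mul_two_pi_mul_I, mul_one]

lemma intervalIntegral_conj {f : ℝ → ℂ} {a b : ℝ} :
    ∫ t in a..b, (starRingEnd ℂ) (f t) = (starRingEnd ℂ) (∫ t in a..b, f t) := by
  rw [intervalIntegral, intervalIntegral, map_sub, ← integral_conj, ← integral_conj]

end aux

/-- Lemma 21: for `0 < |x| < 1/4`, (i) `c_0(x) = 0` and `c_{-m}(x) = conj (c_m(x))`
for every integer `m`; (ii) for every nonzero even `m`, `c_m(x)` is purely
imaginary; (iii) for every odd `m`, `c_m(x)` is real. -/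
theorem stmt_11 (x : ℝ) (hx0 : 0 < |x|) (hx : |x| < 1 / 4) :
    cCoef 0 x = 0 ∧
    (∀ m : ℤ, cCoef (-m) x = (starRingEnd ℂ) (cCoef m x)) ∧
    (∀ m : ℤ, m ≠ 0 → Even m → (cCoef m x).re = 0) ∧
    (∀ m : ℤ, Odd m → (cCoef m x).im = 0) := by
  have hcoef : ∀ m : ℤ, cCoef m x = (1 / (2 * Real.pi)) •
      ∫ t in (-Real.pi)..Real.pi, Fcc x m t := fun m => rfl
  -- Claim A
  have claimA : ∀ m : ℤ, (∫ t in (-Real.pi)..Real.pi, Fcc x (-m) t) =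
      (starRingEnd ℂ) (∫ t in (-Real.pi)..Real.pi, Fcc x m t) := by
    intro m
    rw [← intervalIntegral_conj]
    apply intervalIntegral.integral_congr
    intro t _
    unfold Fcc
    dsimp only
    rw [map_mul, conj_hFun x t hx, ← Complex.exp_conj]
    congr 2
    simp only [map_neg, map_mul, Complex.conj_I, Complex.conj_ofReal, map_intCast]
    push_cast
    ring
  -- Claim B
  have claimB : ∀ m : ℤ, (∫ t in (-Real.pi)..Real.pi, Fcc x m t) =
      (-(-1:ℂ)^m) * ∫ t in (-Real.pi)..Real.pi, Fcc x (-m) t := by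
    intro m
    have hsub := intervalIntegral.integral_comp_sub_left (a := (0:ℝ)) (b := 2*Real.pi)
      (Fcc x m) Real.pi
    rw [show Real.pi - 2*Real.pi = -Real.pi by ring, sub_zero] at hsub
    have hpt : ∀ u : ℝ, Fcc x m (Real.pi - u) = (-(-1:ℂ)^m) * Fcc x (-m) u := by
      intro u
      unfold Fcc
      have e : Complex.exp (-(Complex.I * (m:ℂ) * ((Real.pi - u:ℝ):ℂ))) =
          (-1:ℂ)^m * Complex.exp (-(Complex.I * ((-m:ℤ):ℂ) * (u:ℂ))) := by
        rw [show (-(Complex.I * (m:ℂ) * ((Real.pi - u:ℝ):ℂ))) =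
            ((-m : ℤ):ℂ) * ((Real.pi:ℂ) * Complex.I) +
            -(Complex.I * ((-m:ℤ):ℂ) * (u:ℂ)) by push_cast; ring,
          Complex.exp_add, Complex.exp_int_mul, Complex.exp_pi_mul_I]
        congr 1
        rw [zpow_neg, ← inv_zpow, show ((-1:ℂ))⁻¹ = -1 by norm_num]
      rw [e, hFun_sym x u]
      ring
    have h2 : (∫ u in (0:ℝ)..2*Real.pi, Fcc x m (Real.pi - u)) =
        (-(-1:ℂ)^m) * ∫ u in (0:ℝ)..2*Real.pi, Fcc x (-m) u := by
      simp only [hpt]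
      exact intervalIntegral.integral_const_mul _ _
    have h3 : (∫ u in (0:ℝ)..2*Real.pi, Fcc x (-m) u) =
        ∫ t in (-Real.pi)..Real.pi, Fcc x (-m) t := by
      have := (Fcc_periodic x (-m)).intervalIntegral_add_eq 0 (-Real.pi)
      rw [zero_add, show -Real.pi + 2*Real.pi = Real.pi by ring] at this
      exact this
    rw [← hsub, h2, h3]
  -- combine: c_{-m} = conj c_m
  have partA : ∀ m : ℤ, cCoef (-m) x = (starRingEnd ℂ) (cCoef m x) := by
    intro m
    rw [hcoef, hcoef, claimA, Complex.real_smul, Complex.real_smul, map_mul,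
      Complex.conj_ofReal]
  -- c_m = -(-1)^m conj c_m
  have partB : ∀ m : ℤ, cCoef m x = (-(-1:ℂ)^m) * (starRingEnd ℂ) (cCoef m x) := by
    intro m
    have e3 : (∫ t in (-Real.pi)..Real.pi, Fcc x m t) = (-(-1:ℂ)^m) *
        (starRingEnd ℂ) (∫ t in (-Real.pi)..Real.pi, Fcc x m t) := by
      conv_lhs => rw [claimB m, claimA m]
    calc cCoef m x = ((1 / (2 * Real.pi)) : ℝ) • ∫ t in (-Real.pi)..Real.pi, Fcc x m t :=
          hcoef m
      _ = ((1 / (2 * Real.pi)) : ℝ) • ((-(-1:ℂ)^m) *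
          (starRingEnd ℂ) (∫ t in (-Real.pi)..Real.pi, Fcc x m t)) := by rw [← e3]
      _ = (-(-1:ℂ)^m) * ((1 / (2 * Real.pi)) : ℝ) •
          ((starRingEnd ℂ) (∫ t in (-Real.pi)..Real.pi, Fcc x m t)) := by
          rw [Complex.real_smul, Complex.real_smul]; ring
      _ = (-(-1:ℂ)^m) * (starRingEnd ℂ) (((1 / (2 * Real.pi)) : ℝ) •
          ∫ t in (-Real.pi)..Real.pi, Fcc x m t) := by
          rw [Complex.real_smul, Complex.real_smul, map_mul, Complex.conj_ofReal]
      _ = (-(-1:ℂ)^m) * (starRingEnd ℂ) (cCoef m x) := by rw [← hcoef m]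
  have even_re : ∀ m : ℤ, Even m → (cCoef m x).re = 0 := by
    intro m hm
    have h := partB m
    rw [hm.neg_one_zpow] at h
    have := congrArg Complex.re h
    simp [Complex.conj_re] at this
    linarith
  have odd_im : ∀ m : ℤ, Odd m → (cCoef m x).im = 0 := by
    intro m hm
    have h := partB m
    rw [hm.neg_one_zpow] at h
    simp only [neg_neg, one_mul] at h
    have := congrArg Complex.im h
    simp [Complex.conj_im] at this
    linarith
  refine ⟨?_, partA, fun m _ hm => even_re m hm, odd_im⟩
  have h0re : (cCoef 0 x).re = 0 := even_re 0 (Even.zero)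
  have h0im : (cCoef 0 x).im = 0 := by
    have h := partA 0
    rw [neg_zero] at h
    have := congrArg Complex.im h
    simp [Complex.conj_im] at this
    linarith
  exact Complex.ext h0re h0im
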